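/- arXiv:1511.05514 — 3 statements merged into one kernel-verified Lean document; each statement's English description precedes it below -/
import Mathlib

section
/- For every feasible solution x* of the s-t-path LP there exists a spanning tree edge set S ∈ 𝒮 with x*_e > 0 for all e ∈ S and |C ∩ S| = 1 for every narrow cut C ∈ 𝒞. -/
open Finset SimpleGraph

attribute [local instance 10] Classical.propDecidable

noncomputable section

namespace STT

variable {V : Type*} [Fintype V] [DecidableEq V]

/-- `δ(U)`: the set of edges of the complete graph on `V` with exactly one endpoint in `U`. -/
def cutOf (U : Finset V) : Finset (Sym2 V) :=
  Finset.univ.filter fun e => ∃ u v : V, e = Sym2.mk u v ∧ u ∈ U ∧ v ∉ U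

/-- `E[U]`: the set of edges with both endpoints in `U`. -/
def within (U : Finset V) : Finset (Sym2 V) :=
  Finset.univ.filter fun e => ¬e.IsDiag ∧ ∀ v ∈ e, v ∈ U

/-- `x(F) := ∑_{e ∈ F} x_e`. -/
def xval (x : Sym2 V → ℝ) (F : Finset (Sym2 V)) : ℝ := ∑ e ∈ F, x e

/-- characteristic vector `χ^S` of an edge set `S`. -/
def chi (S : Finset (Sym2 V)) : Sym2 V → ℝ := fun e => if e ∈ S then 1 else 0

/-- `S` is the edge set of a spanning tree of the complete graph on `V`. -/
def IsSpanningTree (S : Finset (Sym2 V)) : Prop :=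
  (∀ e ∈ S, ¬e.IsDiag) ∧
    (SimpleGraph.fromEdgeSet (↑S : Set (Sym2 V))).Connected ∧
    S.card = Fintype.card V - 1

/-- the induced subgraph `(V,S)[M]` is connected. -/
def InducedConn (S : Finset (Sym2 V)) (M : Finset V) : Prop :=
  (SimpleGraph.induce (↑M : Set V) (SimpleGraph.fromEdgeSet (↑S : Set (Sym2 V)))).Connected

/-- `x` is a feasible solution of the `s`-`t`-path LP. -/
def LPFeasible (s t : V) (x : Sym2 V → ℝ) : Prop :=
  (∀ e : Sym2 V, ¬e.IsDiag → 0 ≤ x e) ∧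
    (∀ e : Sym2 V, e.IsDiag → x e = 0) ∧
    (∀ U : Finset V, U.Nonempty → U ≠ Finset.univ → Even (U ∩ {s, t}).card →
      2 ≤ xval x (cutOf U)) ∧
    (∀ U : Finset V, U.Nonempty → U ≠ Finset.univ → ¬Even (U ∩ {s, t}).card →
      1 ≤ xval x (cutOf U)) ∧
    (∀ v : V, v ≠ s → v ≠ t → xval x (cutOf {v}) = 2) ∧
    xval x (cutOf {s}) = 1 ∧ xval x (cutOf {t}) = 1

/-- `C` is a narrow cut w.r.t. `x`. -/
def IsNarrowCut (x : Sym2 V → ℝ) (C : Finset (Sym2 V)) : Prop :=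
  ∃ U : Finset V, U.Nonempty ∧ U ≠ Finset.univ ∧ C = cutOf U ∧ xval x C < 2

/-- property (★) for `x` w.r.t. `x*` and `ε`. -/
def StarProp (s t : V) (xstar : Sym2 V → ℝ) (ε : ℝ) (x : Sym2 V → ℝ) : Prop :=
  xval x (cutOf {s}) = 1 ∧ xval x (cutOf {t}) = 1 ∧
    ∀ F : Finset (Sym2 V), xval xstar F - ε ≤ xval x F ∧ xval x F ≤ xval xstar F + ε

/-- `θ_i := ⌈r (2 − x*(C_i) − ε)⌉` where `C_i = δ(U_i)`. -/
def theta (r : ℕ) (xstar : Sym2 V → ℝ) (ε : ℝ) (U : ℕ → Finset V) (i : ℕ) : ℤ :=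
  ⌈(r : ℝ) * (2 - xval xstar (cutOf (U i)) - ε)⌉

/-- `c(x) = ∑_{e={u,v}∈E} c(u,v) x_e` (each unordered pair counted once). -/
def cost (c : V → V → ℝ) (x : Sym2 V → ℝ) : ℝ :=
  (∑ u : V, ∑ v : V, c u v * x (Sym2.mk u v)) / 2

/-- the finset of all narrow cuts. -/
def NarrowCuts (xstar : Sym2 V → ℝ) : Finset (Finset (Sym2 V)) :=
  Finset.univ.filter fun C => IsNarrowCut xstar C

/-- degree of `v` in the edge set `S`. -/
def degIn (S : Finset (Sym2 V)) (v : V) : ℕ := (S.filter fun e => v ∈ e).card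

/-- `T_S`: vertices whose degree in `S` has the wrong parity. -/
def wrongParity (s t : V) (S : Finset (Sym2 V)) : Finset V :=
  Finset.univ.filter fun v =>
    if v = s ∨ v = t then Even (degIn S v) else ¬Even (degIn S v)

/-- `P` is the edge set of the (unique) `a`-`b`-path in `S`. -/
def IsPathEdges (a b : V) (S P : Finset (Sym2 V)) : Prop :=
  ∃ w : (SimpleGraph.fromEdgeSet (↑S : Set (Sym2 V))).Walk a b,
    w.IsPath ∧ P = w.edges.toFinset

/-- the parity-correction vector `z^S` (for the `s`-`t`-path edge set `IS ⊆ S`). -/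
def zvec (xstar : Sym2 V → ℝ) (β ε γS : ℝ) (eC : Finset (Sym2 V) → Sym2 V)
    (S IS : Finset (Sym2 V)) : Sym2 V → ℝ := fun g =>
  (1 - 2 * β) * γS * chi IS g +
    ∑ C ∈ (NarrowCuts xstar).filter (fun C => Even (S ∩ C).card),
      max 0 (β * (2 - xval xstar C - ε) - (1 - 2 * β) * γS) * chi {eC C} g

/-- the vector `y^S`. -/
def yvec (xstar : Sym2 V → ℝ) (β ε γS : ℝ) (eC : Finset (Sym2 V) → Sym2 V)
    (S IS : Finset (Sym2 V)) : Sym2 V → ℝ := fun g =>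
  β * (1 + ε) * xstar g + (1 - 2 * β) * chi (S \ IS) g + zvec xstar β ε γS eC S IS g

/-- the benefit `b_{S,C}`. -/
def benefit (xstar : Sym2 V → ℝ) (β ε γS : ℝ) (S C : Finset (Sym2 V)) : ℝ :=
  if (S ∩ C).card = 1 then 1 - γS
  else if Even (S ∩ C).card then min (β * (2 - xval xstar C - ε) / (1 - 2 * β)) γS
  else 0

/-- sum of `x` over ordered pairs in `A × B`. -/
def G2 (x : Sym2 V → ℝ) (A B : Finset V) : ℝ := ∑ p ∈ A ×ˢ B, x (Sym2.mk p.1 p.2)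

lemma cutOf_compl (U : Finset V) : cutOf Uᶜ = cutOf U := by
  ext e
  simp only [cutOf, Finset.mem_filter, Finset.mem_univ, true_and, Finset.mem_compl]
  constructor
  · rintro ⟨u, v, rfl, hu, hv⟩
    exact ⟨v, u, Sym2.eq_swap, not_not.mp hv, hu⟩
  · rintro ⟨u, v, rfl, hu, hv⟩
    exact ⟨v, u, Sym2.eq_swap, hv, not_not.mpr hu⟩

lemma cutOf_empty : cutOf (∅ : Finset V) = ∅ := by
  ext e; simp [cutOf]

lemma cutOf_univ : cutOf (Finset.univ : Finset V) = ∅ := by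
  ext e; simp [cutOf]

lemma xval_cutOf (x : Sym2 V → ℝ) (U : Finset V) : xval x (cutOf U) = G2 x U Uᶜ := by
  rw [xval, G2]
  refine (Finset.sum_bij (fun p _ => Sym2.mk p.1 p.2) ?_ ?_ ?_ ?_).symm
  · rintro ⟨u, v⟩ hp
    rw [Finset.mem_product] at hp
    simp only [cutOf, Finset.mem_filter, Finset.mem_univ, true_and]
    exact ⟨u, v, rfl, hp.1, by simpa using hp.2⟩
  · rintro ⟨u, v⟩ hp ⟨u', v'⟩ hq h
    rw [Finset.mem_product] at hp hq
    rcases Sym2.eq_iff.mp h with ⟨rfl, rfl⟩ | ⟨rfl, rfl⟩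
    · rfl
    · exact absurd hq.1 (by simpa using hp.2)
  · intro e he
    simp only [cutOf, Finset.mem_filter, Finset.mem_univ, true_and] at he
    obtain ⟨u, v, rfl, hu, hv⟩ := he
    exact ⟨(u, v), Finset.mem_product.mpr ⟨hu, by simpa using hv⟩, rfl⟩
  · intros; rfl

lemma G2_nonneg (x : Sym2 V → ℝ) (h0 : ∀ e : Sym2 V, ¬e.IsDiag → 0 ≤ x e)
    (hd : ∀ e : Sym2 V, e.IsDiag → x e = 0) (A B : Finset V) : 0 ≤ G2 x A B := by
  refine Finset.sum_nonneg fun p _ => ?_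
  by_cases h : p.1 = p.2
  · rw [hd _ (by simp [Sym2.mk_isDiag_iff, h])]
  · exact h0 _ (by simp [Sym2.mk_isDiag_iff, h])

lemma G2_union_left (x : Sym2 V → ℝ) {A B : Finset V} (C : Finset V) (h : Disjoint A B) :
    G2 x (A ∪ B) C = G2 x A C + G2 x B C := by
  rw [G2, Finset.union_product, Finset.sum_union]
  · rfl
  · rw [Finset.disjoint_left]
    rintro ⟨u, v⟩ hp hq
    rw [Finset.mem_product] at hp hq
    exact (Finset.disjoint_left.mp h) hp.1 hq.1

lemma G2_union_right (x : Sym2 V → ℝ) (A : Finset V) {B C : Finset V} (h : Disjoint B C) :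
    G2 x A (B ∪ C) = G2 x A B + G2 x A C := by
  rw [G2, Finset.product_union, Finset.sum_union]
  · rfl
  · rw [Finset.disjoint_left]
    rintro ⟨u, v⟩ hp hq
    rw [Finset.mem_product] at hp hq
    exact (Finset.disjoint_left.mp h) hp.2 hq.2

lemma cut_identity (x : Sym2 V → ℝ) (P Q : Finset V) :
    xval x (cutOf P) + xval x (cutOf Q) =
      xval x (cutOf (P ∩ Q)) + xval x (cutOf (P ∪ Q)) +
        (G2 x (P \ Q) (Q \ P) + G2 x (Q \ P) (P \ Q)) := by
  set a := P ∩ Q with ha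
  set b := P \ Q with hb
  set c := Q \ P with hc
  set d := (P ∪ Q)ᶜ with hd
  have dab : Disjoint a b := by rw [Finset.disjoint_left]; intro v hv hv'; simp [ha, hb] at hv hv'; tauto
  have dac : Disjoint a c := by rw [Finset.disjoint_left]; intro v hv hv'; simp [ha, hc] at hv hv'; tauto
  have dad : Disjoint a d := by rw [Finset.disjoint_left]; intro v hv hv'; simp [ha, hd] at hv hv'; tauto
  have dbc : Disjoint b c := by rw [Finset.disjoint_left]; intro v hv hv'; simp [hb, hc] at hv hv'; tauto
  have dbd : Disjoint b d := by rw [Finset.disjoint_left]; intro v hv hv'; simp [hb, hd] at hv hv'; tauto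
  have dcd : Disjoint c d := by rw [Finset.disjoint_left]; intro v hv hv'; simp [hc, hd] at hv hv'; tauto
  have hP : P = a ∪ b := by ext v; simp [ha, hb]; tauto
  have hPc : Pᶜ = c ∪ d := by ext v; simp [hc, hd]; tauto
  have hQ : Q = a ∪ c := by ext v; simp [ha, hc]; tauto
  have hQc : Qᶜ = b ∪ d := by ext v; simp [hb, hd]; tauto
  have hac : aᶜ = b ∪ (c ∪ d) := by ext v; simp [ha, hb, hc, hd]; tauto
  have hu : P ∪ Q = a ∪ (b ∪ c) := by ext v; simp [ha, hb, hc]; tauto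
  have huc : (P ∪ Q)ᶜ = d := hd.symm
  rw [xval_cutOf, xval_cutOf, xval_cutOf, xval_cutOf, huc, hu]
  rw [hPc, hP, hQc, hQ, hac]
  rw [G2_union_left x _ dab, G2_union_right x _ dcd, G2_union_right x _ dcd,
    G2_union_left x _ dac, G2_union_right x _ dbd, G2_union_right x _ dbd,
    G2_union_right x _ (Finset.disjoint_union_right.mpr ⟨dbc, dbd⟩),
    G2_union_right x _ dcd,
    G2_union_left x _ (Finset.disjoint_union_right.mpr ⟨dab, dac⟩),
    G2_union_left x _ dbc]
  ring


/-- narrow `s`-sides -/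
def NS (s t : V) (x : Sym2 V → ℝ) : Finset (Finset V) :=
  Finset.univ.filter fun U => s ∈ U ∧ t ∉ U ∧ xval x (cutOf U) < 2

def lev (s t : V) (x : Sym2 V → ℝ) (v : V) : ℕ :=
  ((NS s t x).filter fun U => v ∈ U).card

def cNS (s t : V) (x : Sym2 V → ℝ) (U : Finset V) : ℕ :=
  ((NS s t x).filter fun U' => U ⊆ U').card

def Mset (s t : V) (x : Sym2 V → ℝ) (m : ℕ) : Finset V :=
  Finset.univ.filter fun v => m ≤ lev s t x v

def Lev (s t : V) (x : Sym2 V → ℝ) (j : ℕ) : Finset V :=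
  Finset.univ.filter fun v => lev s t x v = j

section Chain

variable {s t : V} {x : Sym2 V → ℝ} (hst : s ≠ t) (hfeas : LPFeasible s t x)

lemma mem_NS {U : Finset V} :
    U ∈ NS s t x ↔ s ∈ U ∧ t ∉ U ∧ xval x (cutOf U) < 2 := by
  simp [NS]

lemma even_inter_st {W : Finset V} (hs : s ∉ W) (ht : t ∉ W) :
    Even (W ∩ ({s, t} : Finset V)).card := by
  have : W ∩ ({s, t} : Finset V) = ∅ := by
    ext v
    simp only [Finset.mem_inter, Finset.mem_insert, Finset.mem_singleton, Finset.notMem_empty,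
      iff_false, not_and]
    rintro hv (rfl | rfl) <;> tauto
  rw [this]
  simp

include hfeas in
lemma chainNS : ∀ U ∈ NS s t x, ∀ U' ∈ NS s t x, U ⊆ U' ∨ U' ⊆ U := by
  intro U hU U' hU'
  rw [mem_NS] at hU hU'
  by_contra hcon
  push_neg at hcon
  obtain ⟨h1, h2⟩ := hcon
  have hb : (U \ U').Nonempty := by
    rw [Finset.sdiff_nonempty]; exact h1
  have hc : (U' \ U).Nonempty := by
    rw [Finset.sdiff_nonempty]; exact h2
  have hbs : s ∉ U \ U' := by simp [hU'.1]
  have hbt : t ∉ U \ U' := by simp [hU.2.1]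
  have hcs : s ∉ U' \ U := by simp [hU.1]
  have hct : t ∉ U' \ U := by simp [hU'.2.1]
  have hbu : U \ U' ≠ Finset.univ := fun h => hbs (h ▸ Finset.mem_univ s)
  have hcu : U' \ U ≠ Finset.univ := fun h => hcs (h ▸ Finset.mem_univ s)
  have h2b := hfeas.2.2.1 _ hb hbu (even_inter_st hbs hbt)
  have h2c := hfeas.2.2.1 _ hc hcu (even_inter_st hcs hct)
  have hid := cut_identity x U U'ᶜ
  have e1 : U ∩ U'ᶜ = U \ U' := by ext v; simp [Finset.mem_sdiff]
  have e2 : U ∪ U'ᶜ = (U' \ U)ᶜ := by ext v; simp; tauto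
  rw [e1, e2, cutOf_compl, cutOf_compl] at hid
  have g1 := G2_nonneg x hfeas.1 hfeas.2.1 (U \ U'ᶜ) (U'ᶜ \ U)
  have g2 := G2_nonneg x hfeas.1 hfeas.2.1 (U'ᶜ \ U) (U \ U'ᶜ)
  linarith [hU.2.2, hU'.2.2]

lemma cNS_antitone {U U' : Finset V} (h : U ⊆ U') : cNS s t x U' ≤ cNS s t x U := by
  apply Finset.card_le_card
  intro W hW
  rw [Finset.mem_filter] at hW ⊢
  exact ⟨hW.1, h.trans hW.2⟩

lemma cNS_pos {U : Finset V} (hU : U ∈ NS s t x) : 1 ≤ cNS s t x U :=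
  Finset.card_pos.mpr ⟨U, Finset.mem_filter.mpr ⟨hU, subset_rfl⟩⟩

lemma cNS_le (U : Finset V) : cNS s t x U ≤ (NS s t x).card :=
  Finset.card_le_card (Finset.filter_subset _ _)

lemma lev_le (v : V) : lev s t x v ≤ (NS s t x).card :=
  Finset.card_le_card (Finset.filter_subset _ _)

include hfeas in
lemma mem_iff_cNS {U : Finset V} (hU : U ∈ NS s t x) (v : V) :
    v ∈ U ↔ cNS s t x U ≤ lev s t x v := by
  constructor
  · intro hv
    apply Finset.card_le_card
    intro U' hU'
    rw [Finset.mem_filter] at hU' ⊢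
    exact ⟨hU'.1, hU'.2 hv⟩
  · intro h
    by_contra hv
    have hsub : (NS s t x).filter (fun U' => v ∈ U') ⊆
        ((NS s t x).filter (fun U' => U ⊆ U')).erase U := by
      intro U' hU'
      rw [Finset.mem_filter] at hU'
      have hUU' : U ⊆ U' := by
        rcases chainNS hfeas U hU U' hU'.1 with h' | h'
        · exact h'
        · exact absurd (h' hU'.2) hv
      refine Finset.mem_erase.mpr ⟨?_, Finset.mem_filter.mpr ⟨hU'.1, hUU'⟩⟩
      rintro rfl; exact hv hU'.2
    have h1 := Finset.card_le_card hsub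
    have h2 := Finset.card_erase_of_mem
      (Finset.mem_filter.mpr ⟨hU, subset_rfl⟩ : U ∈ (NS s t x).filter (fun U' => U ⊆ U'))
    have h3 := cNS_pos hU
    unfold lev cNS at *
    omega

include hfeas in
lemma cNS_strict {U U' : Finset V} (hU : U ∈ NS s t x) (hU' : U' ∈ NS s t x)
    (hss : U ⊆ U') (hne : U ≠ U') : cNS s t x U' < cNS s t x U := by
  have hsub : (NS s t x).filter (fun W => U' ⊆ W) ⊆ (NS s t x).filter (fun W => U ⊆ W) := by
    intro W hW
    rw [Finset.mem_filter] at hW ⊢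
    exact ⟨hW.1, hss.trans hW.2⟩
  apply Finset.card_lt_card
  rw [Finset.ssubset_iff_of_subset hsub]
  refine ⟨U, Finset.mem_filter.mpr ⟨hU, subset_rfl⟩, fun h => ?_⟩
  exact hne (subset_antisymm hss (Finset.mem_filter.mp h).2)

include hfeas in
lemma exists_cNS_eq {m : ℕ} (h1 : 1 ≤ m) (h2 : m ≤ (NS s t x).card) :
    ∃ U ∈ NS s t x, cNS s t x U = m := by
  have hinj : Set.InjOn (cNS s t x) (NS s t x : Set (Finset V)) := by
    intro U hU U' hU' h
    have hU1 : U ∈ NS s t x := hU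
    have hU2 : U' ∈ NS s t x := hU'
    by_contra hne
    rcases chainNS hfeas U hU1 U' hU2 with hss | hss
    · exact (Nat.ne_of_gt (cNS_strict hfeas hU1 hU2 hss hne)) h
    · exact (Nat.ne_of_gt (cNS_strict hfeas hU2 hU1 hss (Ne.symm hne))) h.symm
  have hcard : ((NS s t x).image (cNS s t x)).card = (NS s t x).card :=
    Finset.card_image_of_injOn hinj
  have hsub : (NS s t x).image (cNS s t x) ⊆ Finset.Icc 1 (NS s t x).card := by
    intro m hm
    obtain ⟨U, hU, rfl⟩ := Finset.mem_image.mp hm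
    exact Finset.mem_Icc.mpr ⟨cNS_pos hU, cNS_le U⟩
  have heq : (NS s t x).image (cNS s t x) = Finset.Icc 1 (NS s t x).card := by
    apply Finset.eq_of_subset_of_card_le hsub
    rw [hcard, Nat.card_Icc]
    omega
  have : m ∈ (NS s t x).image (cNS s t x) := by
    rw [heq]; exact Finset.mem_Icc.mpr ⟨h1, h2⟩
  obtain ⟨U, hU, h⟩ := Finset.mem_image.mp this
  exact ⟨U, hU, h⟩

include hfeas in
lemma Mset_eq {U : Finset V} (hU : U ∈ NS s t x) : Mset s t x (cNS s t x U) = U := by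
  ext v
  rw [Mset, Finset.mem_filter]
  simp only [Finset.mem_univ, true_and]
  exact (mem_iff_cNS hfeas hU v).symm

include hfeas in
lemma Mset_mem_NS {m : ℕ} (h1 : 1 ≤ m) (h2 : m ≤ (NS s t x).card) :
    Mset s t x m ∈ NS s t x := by
  obtain ⟨U, hU, hc⟩ := exists_cNS_eq hfeas h1 h2
  rw [← hc, Mset_eq hfeas hU]
  exact hU

lemma lev_s_eq : lev s t x s = (NS s t x).card := by
  unfold lev
  congr 1
  apply Finset.filter_true_of_mem
  intro U hU
  exact (mem_NS.mp hU).1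

lemma lev_t_eq : lev s t x t = 0 := by
  unfold lev
  rw [Finset.card_eq_zero, Finset.filter_eq_empty_iff]
  intro U hU
  exact (mem_NS.mp hU).2.1

include hst hfeas in
lemma singleton_s_mem : ({s} : Finset V) ∈ NS s t x := by
  rw [mem_NS]
  refine ⟨Finset.mem_singleton_self s, ?_, ?_⟩
  · rw [Finset.mem_singleton]; exact hst.symm
  · rw [hfeas.2.2.2.2.2.1]; norm_num

include hst hfeas in
lemma compl_t_mem : ({t} : Finset V)ᶜ ∈ NS s t x := by
  rw [mem_NS]
  refine ⟨?_, ?_, ?_⟩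
  · rw [Finset.mem_compl, Finset.mem_singleton]; exact hst
  · simp
  · rw [cutOf_compl, hfeas.2.2.2.2.2.2]; norm_num

include hst hfeas in
lemma k_pos : 1 ≤ (NS s t x).card :=
  Finset.card_pos.mpr ⟨{s}, singleton_s_mem hst hfeas⟩

include hst hfeas in
lemma Lev_top : Lev s t x (NS s t x).card = {s} := by
  ext v
  rw [Lev, Finset.mem_filter]
  simp only [Finset.mem_univ, true_and, Finset.mem_singleton]
  constructor
  · intro h
    have : (NS s t x).filter (fun U => v ∈ U) = NS s t x :=
      Finset.eq_of_subset_of_card_le (Finset.filter_subset _ _) (le_of_eq h.symm)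
    have hmem : ({s} : Finset V) ∈ (NS s t x).filter (fun U => v ∈ U) := by
      rw [this]; exact singleton_s_mem hst hfeas
    have := (Finset.mem_filter.mp hmem).2
    rwa [Finset.mem_singleton] at this
  · rintro rfl; exact lev_s_eq

include hst hfeas in
lemma Lev_bot : Lev s t x 0 = {t} := by
  ext v
  rw [Lev, Finset.mem_filter]
  simp only [Finset.mem_univ, true_and, Finset.mem_singleton]
  constructor
  · intro h
    by_contra hv
    have hmem : ({t} : Finset V)ᶜ ∈ (NS s t x).filter (fun U => v ∈ U) := by
      rw [Finset.mem_filter]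
      exact ⟨compl_t_mem hst hfeas, by rwa [Finset.mem_compl, Finset.mem_singleton]⟩
    have : 0 < lev s t x v := Finset.card_pos.mpr ⟨_, hmem⟩
    omega
  · rintro rfl; exact lev_t_eq

include hst hfeas in
lemma Lev_nonempty {j : ℕ} (hj : j ≤ (NS s t x).card) : (Lev s t x j).Nonempty := by
  rcases Nat.eq_or_lt_of_le hj with rfl | hjk
  · rw [Lev_top hst hfeas]; exact ⟨s, Finset.mem_singleton_self s⟩
  rcases Nat.eq_zero_or_pos j with rfl | hj0
  · rw [Lev_bot hst hfeas]; exact ⟨t, Finset.mem_singleton_self t⟩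
  obtain ⟨U, hU, hcU⟩ := exists_cNS_eq hfeas (m := j + 1) (by omega) (by omega)
  obtain ⟨U', hU', hcU'⟩ := exists_cNS_eq hfeas (m := j) (by omega) hj
  have hss : U ⊆ U' := by
    rcases chainNS hfeas U hU U' hU' with h | h
    · exact h
    · exfalso
      have := cNS_antitone (s := s) (t := t) (x := x) h
      omega
  have hne : U ≠ U' := by rintro rfl; omega
  obtain ⟨v, hv', hv⟩ := Finset.exists_of_ssubset (ssubset_of_subset_of_ne hss hne)
  refine ⟨v, ?_⟩
  rw [Lev, Finset.mem_filter]
  refine ⟨Finset.mem_univ v, ?_⟩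
  have h1 : j ≤ lev s t x v := hcU' ▸ (mem_iff_cNS hfeas hU' v).mp hv'
  have h2 : ¬(j + 1 ≤ lev s t x v) := fun h => hv ((mem_iff_cNS hfeas hU v).mpr (hcU ▸ h))
  omega

lemma G2_comm (x : Sym2 V → ℝ) (A B : Finset V) : G2 x A B = G2 x B A := by
  rw [G2, G2]
  apply Finset.sum_nbij' (fun p => Prod.swap p) (fun p => Prod.swap p)
  · rintro ⟨u, v⟩ hp
    rw [Finset.mem_product] at hp ⊢
    exact ⟨hp.2, hp.1⟩
  · rintro ⟨u, v⟩ hp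
    rw [Finset.mem_product] at hp ⊢
    exact ⟨hp.2, hp.1⟩
  · rintro ⟨u, v⟩ _; rfl
  · rintro ⟨u, v⟩ _; rfl
  · rintro ⟨u, v⟩ _; exact congrArg x Sym2.eq_swap

lemma G2_mono_left (x : Sym2 V → ℝ) (h0 : ∀ e : Sym2 V, ¬e.IsDiag → 0 ≤ x e)
    (hd : ∀ e : Sym2 V, e.IsDiag → x e = 0) {A A' : Finset V} (B : Finset V) (h : A ⊆ A') :
    G2 x A B ≤ G2 x A' B := by
  apply Finset.sum_le_sum_of_subset_of_nonneg
  · intro p hp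
    rw [Finset.mem_product] at hp ⊢
    exact ⟨h hp.1, hp.2⟩
  · intro p _ _
    by_cases hpd : p.1 = p.2
    · rw [hd _ (by simp [Sym2.mk_isDiag_iff, hpd])]
    · exact h0 _ (by simp [Sym2.mk_isDiag_iff, hpd])

lemma Mset_zero : Mset s t x 0 = Finset.univ := by
  ext v; simp [Mset]

lemma Mset_gt {m : ℕ} (hm : (NS s t x).card < m) : Mset s t x m = ∅ := by
  ext v
  simp only [Mset, Finset.mem_filter, Finset.mem_univ, true_and, Finset.notMem_empty, iff_false]
  have := lev_le (s := s) (t := t) (x := x) v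
  omega

lemma Mset_subset {m m' : ℕ} (h : m ≤ m') : Mset s t x m' ⊆ Mset s t x m := by
  intro v hv
  simp only [Mset, Finset.mem_filter, Finset.mem_univ, true_and] at hv ⊢
  omega

include hfeas in
lemma cut_Mset_lt {m : ℕ} (h1 : 1 ≤ m) (h2 : m ≤ (NS s t x).card) :
    xval x (cutOf (Mset s t x m)) < 2 :=
  (mem_NS.mp (Mset_mem_NS hfeas h1 h2)).2.2

lemma cut_Mset_zero : xval x (cutOf (Mset s t x 0)) = 0 := by
  rw [Mset_zero, cutOf_univ, xval, Finset.sum_empty]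

lemma cut_Mset_top {m : ℕ} (hm : (NS s t x).card < m) : xval x (cutOf (Mset s t x m)) = 0 := by
  rw [Mset_gt hm, cutOf_empty, xval, Finset.sum_empty]

include hst hfeas in
lemma s_not_mem_Lev {j : ℕ} (hj : j ≠ (NS s t x).card) : s ∉ Lev s t x j := by
  simp only [Lev, Finset.mem_filter, Finset.mem_univ, true_and, lev_s_eq]
  omega

include hst hfeas in
lemma t_not_mem_Lev {j : ℕ} (hj : j ≠ 0) : t ∉ Lev s t x j := by
  simp only [Lev, Finset.mem_filter, Finset.mem_univ, true_and, lev_t_eq]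
  omega

include hst hfeas in
lemma cut_Lev_interior {j : ℕ} (h1 : 1 ≤ j) (h2 : j < (NS s t x).card) :
    2 ≤ xval x (cutOf (Lev s t x j)) := by
  apply hfeas.2.2.1
  · exact Lev_nonempty hst hfeas (le_of_lt h2)
  · intro h
    exact s_not_mem_Lev hst hfeas (by omega) (h ▸ Finset.mem_univ s)
  · exact even_inter_st (s_not_mem_Lev hst hfeas (by omega)) (t_not_mem_Lev hst hfeas (by omega))

include hst hfeas in
lemma cut_Lev_top : xval x (cutOf (Lev s t x (NS s t x).card)) = 1 := by
  rw [Lev_top hst hfeas]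
  exact hfeas.2.2.2.2.2.1

include hst hfeas in
lemma cut_Lev_bot : xval x (cutOf (Lev s t x 0)) = 1 := by
  rw [Lev_bot hst hfeas]
  exact hfeas.2.2.2.2.2.2

include hfeas in
/-- The key cut-splitting identity along the chain. -/
lemma Mset_split (j : ℕ) :
    xval x (cutOf (Mset s t x (j + 1))) + xval x (cutOf (Mset s t x j)) =
      xval x (cutOf (Lev s t x j)) + 2 * G2 x (Mset s t x (j + 1)) (Mset s t x j)ᶜ := by
  have hid := cut_identity x (Mset s t x (j + 1)) (Mset s t x j)ᶜ
  have e1 : Mset s t x (j + 1) ∩ (Mset s t x j)ᶜ = ∅ := by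
    ext v; simp only [Finset.mem_inter, Finset.mem_compl, Mset, Finset.mem_filter,
      Finset.mem_univ, true_and, Finset.notMem_empty, iff_false, not_and, not_not]
    omega
  have e2 : Mset s t x (j + 1) ∪ (Mset s t x j)ᶜ = (Lev s t x j)ᶜ := by
    ext v; simp only [Finset.mem_union, Finset.mem_compl, Mset, Lev, Finset.mem_filter,
      Finset.mem_univ, true_and]
    omega
  have e3 : Mset s t x (j + 1) \ (Mset s t x j)ᶜ = Mset s t x (j + 1) := by
    ext v; simp only [Finset.mem_sdiff, Finset.mem_compl, Mset, Finset.mem_filter,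
      Finset.mem_univ, true_and, not_not]
    omega
  have e4 : (Mset s t x j)ᶜ \ Mset s t x (j + 1) = (Mset s t x j)ᶜ := by
    ext v; simp only [Finset.mem_sdiff, Finset.mem_compl, Mset, Finset.mem_filter,
      Finset.mem_univ, true_and]
    omega
  rw [e1, e2, e3, e4, cutOf_empty, cutOf_compl, cutOf_compl,
    G2_comm x (Mset s t x j)ᶜ (Mset s t x (j+1))] at hid
  have h0 : xval x (∅ : Finset (Sym2 V)) = 0 := Finset.sum_empty
  linarith

include hst hfeas in
/-- Claim B: there is a positive edge between consecutive layers. -/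
lemma crossEdge {j : ℕ} (h1 : 1 ≤ j) (h2 : j ≤ (NS s t x).card) :
    ∃ u ∈ Lev s t x j, ∃ v ∈ Lev s t x (j - 1), 0 < x (Sym2.mk u v) := by
  by_contra hcon
  push_neg at hcon
  set k := (NS s t x).card with hk
  -- the crossing sum between consecutive layers vanishes
  have hzero : G2 x (Lev s t x j) (Lev s t x (j - 1)) = 0 := by
    apply Finset.sum_eq_zero
    rintro ⟨u, v⟩ hp
    rw [Finset.mem_product] at hp
    have h1' := hcon u hp.1 v hp.2
    have hne : u ≠ v := by
      rintro rfl
      have hu := hp.1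
      have hv := hp.2
      simp only [Lev, Finset.mem_filter, Finset.mem_univ, true_and] at hu hv
      omega
    have := hfeas.1 (Sym2.mk u v) (by simp [Sym2.mk_isDiag_iff, hne])
    exact le_antisymm h1' this
  -- the two split identities
  have hid1 := Mset_split (s := s) (t := t) hfeas j
  have hid2 := Mset_split (s := s) (t := t) hfeas (j - 1)
  rw [show j - 1 + 1 = j by omega] at hid2
  -- the degree-type decomposition of x(δ(M_j))
  have e1 : Mset s t x j = Mset s t x (j + 1) ∪ Lev s t x j := by
    ext v; simp only [Mset, Lev, Finset.mem_union, Finset.mem_filter, Finset.mem_univ, true_and]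
    omega
  have e2 : (Mset s t x j)ᶜ = Lev s t x (j - 1) ∪ (Mset s t x (j - 1))ᶜ := by
    ext v; simp only [Mset, Lev, Finset.mem_union, Finset.mem_compl, Finset.mem_filter,
      Finset.mem_univ, true_and]
    omega
  have d1 : Disjoint (Mset s t x (j + 1)) (Lev s t x j) := by
    rw [Finset.disjoint_left]
    intro v hv hv'
    simp only [Mset, Lev, Finset.mem_filter, Finset.mem_univ, true_and] at hv hv'
    omega
  have d2 : Disjoint (Lev s t x (j - 1)) ((Mset s t x (j - 1))ᶜ) := by
    rw [Finset.disjoint_left]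
    intro v hv hv'
    simp only [Mset, Lev, Finset.mem_compl, Finset.mem_filter, Finset.mem_univ, true_and] at hv hv'
    omega
  have hdec : xval x (cutOf (Mset s t x j)) =
      G2 x (Mset s t x (j + 1)) (Mset s t x j)ᶜ + G2 x (Lev s t x j) (Mset s t x j)ᶜ := by
    rw [xval_cutOf]
    nth_rewrite 1 [e1]
    exact G2_union_left x _ d1
  have hdec2 : G2 x (Lev s t x j) (Mset s t x j)ᶜ =
      G2 x (Lev s t x j) (Lev s t x (j - 1)) + G2 x (Lev s t x j) ((Mset s t x (j - 1))ᶜ) := by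
    rw [e2]
    exact G2_union_right x _ d2
  have hmono : G2 x (Lev s t x j) ((Mset s t x (j - 1))ᶜ) ≤
      G2 x (Mset s t x j) ((Mset s t x (j - 1))ᶜ) := by
    apply G2_mono_left x hfeas.1 hfeas.2.1
    intro v hv
    simp only [Mset, Lev, Finset.mem_filter, Finset.mem_univ, true_and] at hv ⊢
    omega
  have hkey : xval x (cutOf (Lev s t x j)) + xval x (cutOf (Lev s t x (j - 1))) ≤
      xval x (cutOf (Mset s t x (j + 1))) + xval x (cutOf (Mset s t x (j - 1))) := by
    linarith
  -- now derive a contradiction case by case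
  have hbj : (1 : ℝ) ≤ xval x (cutOf (Lev s t x j)) := by
    rcases Nat.eq_or_lt_of_le h2 with heq | hlt
    · rw [heq]; rw [cut_Lev_top hst hfeas]
    · linarith [cut_Lev_interior hst hfeas h1 hlt]
  have hbj' : (1 : ℝ) ≤ xval x (cutOf (Lev s t x (j - 1))) := by
    rcases Nat.eq_zero_or_pos (j - 1) with heq | hpos
    · rw [heq, cut_Lev_bot hst hfeas]
    · have : j - 1 < k := by omega
      linarith [cut_Lev_interior hst hfeas hpos this]
  have haj1 : xval x (cutOf (Mset s t x (j + 1))) < 2 := by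
    rcases Nat.lt_or_ge k (j + 1) with hlt | hge
    · rw [cut_Mset_top hlt]; norm_num
    · exact cut_Mset_lt hfeas (by omega) hge
  have haj0 : xval x (cutOf (Mset s t x (j - 1))) < 2 := by
    rcases Nat.eq_zero_or_pos (j - 1) with heq | hpos
    · rw [heq, cut_Mset_zero]; norm_num
    · exact cut_Mset_lt hfeas hpos (by omega)
  -- need one of the four quantities to be strictly better
  rcases Nat.eq_or_lt_of_le h2 with heq | hlt
  · -- j = k : x(δ(L_j)) = 1 but M_{j+1} is empty
    have ha : xval x (cutOf (Mset s t x (j + 1))) = 0 := cut_Mset_top (by omega)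
    rcases Nat.eq_zero_or_pos (j - 1) with heq0 | hpos
    · have hb0 : xval x (cutOf (Mset s t x (j - 1))) = 0 := by rw [heq0]; exact cut_Mset_zero
      linarith
    · have hbig : (2 : ℝ) ≤ xval x (cutOf (Lev s t x (j - 1))) :=
        cut_Lev_interior hst hfeas hpos (by omega)
      linarith
  · have hbig : (2 : ℝ) ≤ xval x (cutOf (Lev s t x j)) := cut_Lev_interior hst hfeas h1 hlt
    rcases Nat.eq_zero_or_pos (j - 1) with heq0 | hpos
    · have hb0 : xval x (cutOf (Mset s t x (j - 1))) = 0 := by rw [heq0]; exact cut_Mset_zero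
      linarith
    · have hbig' : (2 : ℝ) ≤ xval x (cutOf (Lev s t x (j - 1))) :=
        cut_Lev_interior hst hfeas hpos (by omega)
      linarith

include hst hfeas in
/-- Claim A: each layer is "connected" in the support of `x`. -/
lemma layerCross {j : ℕ} (hj : j ≤ (NS s t x).card) :
    ∀ W ⊆ Lev s t x j, W.Nonempty → W ≠ Lev s t x j →
      ∃ u ∈ W, ∃ v ∈ Lev s t x j \ W, 0 < x (Sym2.mk u v) := by
  intro W hW hWne hWne'
  -- the two extreme layers are singletons, so there is nothing to prove there
  rcases Nat.eq_zero_or_pos j with rfl | hj1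
  · exfalso
    rw [Lev_bot hst hfeas] at hW hWne'
    rcases Finset.subset_singleton_iff.mp hW with rfl | rfl
    · exact hWne.ne_empty rfl
    · exact hWne' rfl
  rcases Nat.eq_or_lt_of_le hj with rfl | hjk
  · exfalso
    rw [Lev_top hst hfeas] at hW hWne'
    rcases Finset.subset_singleton_iff.mp hW with rfl | rfl
    · exact hWne.ne_empty rfl
    · exact hWne' rfl
  -- interior layer
  by_contra hcon
  push_neg at hcon
  set k := (NS s t x).card with hk
  have hWlev : ∀ v ∈ W, lev s t x v = j := by
    intro v hv
    have := hW hv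
    simp only [Lev, Finset.mem_filter, Finset.mem_univ, true_and] at this
    exact this
  have hzero : G2 x W (Lev s t x j \ W) = 0 := by
    apply Finset.sum_eq_zero
    rintro ⟨u, v⟩ hp
    rw [Finset.mem_product] at hp
    have h1' := hcon u hp.1 v hp.2
    have hne : u ≠ v := by
      rintro rfl
      exact (Finset.mem_sdiff.mp hp.2).2 hp.1
    have := hfeas.1 (Sym2.mk u v) (by simp [Sym2.mk_isDiag_iff, hne])
    exact le_antisymm h1' this
  obtain ⟨z, hz⟩ : (Lev s t x j \ W).Nonempty := by
    rw [Finset.sdiff_nonempty]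
    intro h
    exact hWne' (subset_antisymm hW h)
  obtain ⟨w, hw⟩ := hWne
  have hzLev := (Finset.mem_sdiff.mp hz).1
  have hzW := (Finset.mem_sdiff.mp hz).2
  have hzlev : lev s t x z = j := by
    simpa only [Lev, Finset.mem_filter, Finset.mem_univ, true_and] using hzLev
  have hwlev := hWlev w hw
  -- the two sets A and B
  set A := Mset s t x (j + 1) ∪ W with hA
  set B := Mset s t x j \ W with hB
  have hsA : s ∈ A := by
    rw [hA, Finset.mem_union]
    left
    simp only [Mset, Finset.mem_filter, Finset.mem_univ, true_and, lev_s_eq]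
    omega
  have htA : t ∉ A := by
    rw [hA, Finset.mem_union]
    rintro (h | h)
    · simp only [Mset, Finset.mem_filter, Finset.mem_univ, true_and, lev_t_eq] at h
      omega
    · have := hWlev t h
      rw [lev_t_eq] at this
      omega
  have hsB : s ∈ B := by
    rw [hB, Finset.mem_sdiff]
    constructor
    · simp only [Mset, Finset.mem_filter, Finset.mem_univ, true_and, lev_s_eq]
      omega
    · intro h
      have := hWlev s h
      rw [lev_s_eq] at this
      omega
  have htB : t ∉ B := by
    rw [hB, Finset.mem_sdiff]
    rintro ⟨h, -⟩
    simp only [Mset, Finset.mem_filter, Finset.mem_univ, true_and, lev_t_eq] at h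
    omega
  -- A is not narrow
  have hA2 : 2 ≤ xval x (cutOf A) := by
    by_contra hlt
    push_neg at hlt
    have hANS : A ∈ NS s t x := mem_NS.mpr ⟨hsA, htA, hlt⟩
    have hcA : cNS s t x A ≤ j := by
      have := (mem_iff_cNS hfeas hANS w).mp (by rw [hA, Finset.mem_union]; right; exact hw)
      omega
    have : z ∈ A := (mem_iff_cNS hfeas hANS z).mpr (by omega)
    rw [hA, Finset.mem_union] at this
    rcases this with h | h
    · simp only [Mset, Finset.mem_filter, Finset.mem_univ, true_and] at h
      omega
    · exact hzW h
  -- B is not narrow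
  have hB2 : 2 ≤ xval x (cutOf B) := by
    by_contra hlt
    push_neg at hlt
    have hBNS : B ∈ NS s t x := mem_NS.mpr ⟨hsB, htB, hlt⟩
    have hcB : cNS s t x B ≤ j := by
      have := (mem_iff_cNS hfeas hBNS z).mp (by
        rw [hB, Finset.mem_sdiff]
        refine ⟨?_, hzW⟩
        simp only [Mset, Finset.mem_filter, Finset.mem_univ, true_and]
        omega)
      omega
    have : w ∈ B := (mem_iff_cNS hfeas hBNS w).mpr (by omega)
    rw [hB, Finset.mem_sdiff] at this
    exact this.2 hw
  -- the identity
  have hid := cut_identity x A B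
  have e1 : A ∩ B = Mset s t x (j + 1) := by
    ext v
    simp only [hA, hB, Finset.mem_inter, Finset.mem_union, Finset.mem_sdiff, Mset,
      Finset.mem_filter, Finset.mem_univ, true_and]
    constructor
    · rintro ⟨h1 | h1, h2, h3⟩
      · exact h1
      · exact absurd h1 h3
    · intro h
      refine ⟨Or.inl h, by omega, fun hvW => by have := hWlev _ hvW; omega⟩
  have e2 : A ∪ B = Mset s t x j := by
    ext v
    simp only [hA, hB, Finset.mem_union, Finset.mem_sdiff, Mset,
      Finset.mem_filter, Finset.mem_univ, true_and]
    constructor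
    · rintro ((h | h) | ⟨h, -⟩)
      · omega
      · have := hWlev _ h; omega
      · exact h
    · intro h
      by_cases hvW : v ∈ W
      · exact Or.inl (Or.inr hvW)
      · exact Or.inr ⟨h, hvW⟩
  have e3 : A \ B = W := by
    ext v
    simp only [hA, hB, Finset.mem_sdiff, Finset.mem_union, Mset,
      Finset.mem_filter, Finset.mem_univ, true_and, not_and, not_not]
    constructor
    · rintro ⟨h1 | h1, h2⟩
      · exact h2 (by omega)
      · exact h1
    · intro h
      have := hWlev _ h
      exact ⟨Or.inr h, fun _ => h⟩
  have e4 : B \ A = Lev s t x j \ W := by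
    ext v
    simp only [hA, hB, Lev, Finset.mem_sdiff, Finset.mem_union, Mset,
      Finset.mem_filter, Finset.mem_univ, true_and, not_or]
    constructor
    · rintro ⟨⟨h1, h2⟩, h3, h4⟩
      have : lev s t x v = j := by
        by_contra hne
        have : j + 1 ≤ lev s t x v := by omega
        exact h3 this
      exact ⟨this, h2⟩
    · rintro ⟨h1, h2⟩
      exact ⟨⟨by omega, h2⟩, by omega, h2⟩
  rw [e1, e2, e3, e4] at hid
  have hMj1 : xval x (cutOf (Mset s t x (j + 1))) < 2 := by
    rcases Nat.lt_or_ge k (j + 1) with hlt | hge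
    · rw [cut_Mset_top hlt]; norm_num
    · exact cut_Mset_lt hfeas (by omega) hge
  have hMj : xval x (cutOf (Mset s t x j)) < 2 := cut_Mset_lt hfeas hj1 (le_of_lt hjk)
  have hg2 : G2 x (Lev s t x j \ W) W = 0 := by
    rw [G2_comm]; exact hzero
  linarith

end Chain

/-- greedily grow a spanning tree of `M` in the support of `x`. -/
lemma grow (x : Sym2 V → ℝ) (M : Finset V)
    (hcross : ∀ W ⊆ M, W.Nonempty → W ≠ M → ∃ u ∈ W, ∃ v ∈ M \ W, 0 < x (Sym2.mk u v)) :
    ∀ n (A : Finset V) (T : Finset (Sym2 V)), A ⊆ M → A.Nonempty → M.card - A.card ≤ n →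
      (∀ e ∈ T, ¬e.IsDiag ∧ 0 < x e ∧ ∀ w ∈ e, w ∈ A) → T.card + 1 = A.card →
      (∀ u ∈ A, ∀ v ∈ A, (SimpleGraph.fromEdgeSet (↑T : Set (Sym2 V))).Reachable u v) →
      ∃ T' : Finset (Sym2 V), (∀ e ∈ T', ¬e.IsDiag ∧ 0 < x e ∧ ∀ w ∈ e, w ∈ M) ∧
        T'.card + 1 = M.card ∧
        ∀ u ∈ M, ∀ v ∈ M, (SimpleGraph.fromEdgeSet (↑T' : Set (Sym2 V))).Reachable u v := by
  intro n
  induction n with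
  | zero =>
    intro A T hAM hAne hcard hT hTcard hreach
    have hle := Finset.card_le_card hAM
    have : A = M := Finset.eq_of_subset_of_card_le hAM (by omega)
    subst this
    exact ⟨T, hT, hTcard, hreach⟩
  | succ n ih =>
    intro A T hAM hAne hcard hT hTcard hreach
    by_cases hAM' : A = M
    · subst hAM'
      exact ⟨T, hT, hTcard, hreach⟩
    obtain ⟨u, hu, v, hv, hx⟩ := hcross A hAM hAne hAM'
    rw [Finset.mem_sdiff] at hv
    obtain ⟨hvM, hvA⟩ := hv
    have hne : u ≠ v := fun h => hvA (h ▸ hu)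
    have hTnew : Sym2.mk u v ∉ T := by
      intro h
      exact hvA ((hT _ h).2.2 v (Sym2.mem_mk_right u v))
    have hmono : SimpleGraph.fromEdgeSet (↑T : Set (Sym2 V)) ≤
        SimpleGraph.fromEdgeSet (↑(insert (Sym2.mk u v) T) : Set (Sym2 V)) :=
      SimpleGraph.fromEdgeSet_mono (Finset.coe_subset.mpr (Finset.subset_insert _ _))
    have hadj : (SimpleGraph.fromEdgeSet (↑(insert (Sym2.mk u v) T) : Set (Sym2 V))).Adj u v :=
      (SimpleGraph.fromEdgeSet_adj _).mpr ⟨by simp, hne⟩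
    apply ih (insert v A) (insert (Sym2.mk u v) T)
    · exact Finset.insert_subset hvM hAM
    · exact Finset.insert_nonempty _ _
    · rw [Finset.card_insert_of_notMem hvA]
      have h1 : A.card < M.card := Finset.card_lt_card (ssubset_of_subset_of_ne hAM hAM')
      omega
    · intro e he
      rcases Finset.mem_insert.mp he with rfl | he'
      · refine ⟨by simp [Sym2.mk_isDiag_iff, hne], hx, ?_⟩
        intro w hw
        rcases Sym2.mem_iff.mp hw with rfl | rfl
        · exact Finset.mem_insert_of_mem hu
        · exact Finset.mem_insert_self _ _
      · obtain ⟨hd, hp, hin⟩ := hT e he'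
        exact ⟨hd, hp, fun w hw => Finset.mem_insert_of_mem (hin w hw)⟩
    · rw [Finset.card_insert_of_notMem hTnew, Finset.card_insert_of_notMem hvA]
      omega
    · intro a ha b hb
      have hAv : ∀ c ∈ A,
          (SimpleGraph.fromEdgeSet (↑(insert (Sym2.mk u v) T) : Set (Sym2 V))).Reachable c v :=
        fun c hc => (SimpleGraph.Reachable.mono hmono (hreach c hc u hu)).trans hadj.reachable
      rcases Finset.mem_insert.mp ha with rfl | ha' <;> rcases Finset.mem_insert.mp hb with rfl | hb'
      · exact SimpleGraph.Reachable.refl _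
      · exact (hAv b hb').symm
      · exact hAv a ha'
      · exact SimpleGraph.Reachable.mono hmono (hreach a ha' b hb')

section Build

variable {s t : V} {x : Sym2 V → ℝ} (hst : s ≠ t) (hfeas : LPFeasible s t x)

include hst hfeas in
lemma layerTree {j : ℕ} (hj : j ≤ (NS s t x).card) :
    ∃ T : Finset (Sym2 V), (∀ e ∈ T, ¬e.IsDiag ∧ 0 < x e ∧ ∀ w ∈ e, w ∈ Lev s t x j) ∧
      T.card + 1 = (Lev s t x j).card ∧
      ∀ u ∈ Lev s t x j, ∀ v ∈ Lev s t x j,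
        (SimpleGraph.fromEdgeSet (↑T : Set (Sym2 V))).Reachable u v := by
  obtain ⟨a, ha⟩ := Lev_nonempty hst hfeas hj
  apply grow x (Lev s t x j) (layerCross hst hfeas hj) (Lev s t x j).card {a} ∅
  · exact Finset.singleton_subset_iff.mpr ha
  · exact Finset.singleton_nonempty a
  · omega
  · intro e he
    exact absurd he (Finset.notMem_empty e)
  · simp
  · intro u hu v hv
    rw [Finset.mem_singleton] at hu hv
    subst hu; subst hv
    rfl

include hst hfeas in
lemma narrow_normalize {C : Finset (Sym2 V)} (hC : IsNarrowCut x C) :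
    ∃ U₀ ∈ NS s t x, C = cutOf U₀ := by
  obtain ⟨U, hUne, hUuniv, rfl, hlt⟩ := hC
  by_cases hs : s ∈ U <;> by_cases ht : t ∈ U
  · exfalso
    have hint : U ∩ ({s, t} : Finset V) = {s, t} := by
      ext v
      simp only [Finset.mem_inter, Finset.mem_insert, Finset.mem_singleton, and_iff_right_iff_imp]
      rintro (rfl | rfl) <;> assumption
    have heven : Even (U ∩ ({s, t} : Finset V)).card := by
      rw [hint, Finset.card_insert_of_notMem (by simpa using hst), Finset.card_singleton]
      exact even_two
    linarith [hfeas.2.2.1 U hUne hUuniv heven]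
  · exact ⟨U, mem_NS.mpr ⟨hs, ht, hlt⟩, rfl⟩
  · refine ⟨Uᶜ, mem_NS.mpr ⟨?_, ?_, ?_⟩, (cutOf_compl U).symm⟩
    · rwa [Finset.mem_compl]
    · rwa [Finset.mem_compl, not_not]
    · rwa [cutOf_compl]
  · exfalso
    linarith [hfeas.2.2.1 U hUne hUuniv (even_inter_st hs ht)]

include hst hfeas in
lemma main_tree (hV : 2 ≤ Fintype.card V) :
    ∃ S : Finset (Sym2 V),
      (∀ e ∈ S, ¬e.IsDiag) ∧
      (SimpleGraph.fromEdgeSet (↑S : Set (Sym2 V))).Connected ∧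
      S.card = Fintype.card V - 1 ∧
      (∀ e ∈ S, 0 < x e) ∧
      ∀ C : Finset (Sym2 V), IsNarrowCut x C → (C ∩ S).card = 1 := by
  classical
  set k := (NS s t x).card with hk
  -- choose spanning trees of the layers
  have hTex : ∀ j : ℕ, ∃ T : Finset (Sym2 V), j ≤ k →
      (∀ e ∈ T, ¬e.IsDiag ∧ 0 < x e ∧ ∀ w ∈ e, w ∈ Lev s t x j) ∧
      T.card + 1 = (Lev s t x j).card ∧
      ∀ u ∈ Lev s t x j, ∀ v ∈ Lev s t x j,
        (SimpleGraph.fromEdgeSet (↑T : Set (Sym2 V))).Reachable u v := by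
    intro j
    by_cases hj : j ≤ k
    · obtain ⟨T, hT⟩ := layerTree hst hfeas hj
      exact ⟨T, fun _ => hT⟩
    · exact ⟨∅, fun h => absurd h hj⟩
  choose Tj hTj using hTex
  -- choose the cross edges
  have hCex : ∀ j : ℕ, ∃ u v : V, 1 ≤ j → j ≤ k →
      u ∈ Lev s t x j ∧ v ∈ Lev s t x (j - 1) ∧ 0 < x (Sym2.mk u v) := by
    intro j
    by_cases hj : 1 ≤ j ∧ j ≤ k
    · obtain ⟨u, hu, v, hv, hx⟩ := crossEdge hst hfeas hj.1 hj.2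
      exact ⟨u, v, fun _ _ => ⟨hu, hv, hx⟩⟩
    · exact ⟨s, s, fun h1 h2 => absurd ⟨h1, h2⟩ hj⟩
  choose uj vj hjj using hCex
  have hk1 : 1 ≤ k := k_pos hst hfeas
  -- basic facts about levels
  have hlev_le : ∀ v : V, lev s t x v ≤ k := fun v => lev_le v
  have hmemLev : ∀ v : V, v ∈ Lev s t x (lev s t x v) := by
    intro v
    simp [Lev]
  have hlevLev : ∀ (j : ℕ) (v : V), v ∈ Lev s t x j → lev s t x v = j := by
    intro j v hv
    simpa only [Lev, Finset.mem_filter, Finset.mem_univ, true_and] using hv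
  set S : Finset (Sym2 V) :=
    (Finset.range (k + 1)).biUnion Tj ∪
      (Finset.Icc 1 k).image (fun j => Sym2.mk (uj j) (vj j)) with hS
  have hTsub : ∀ j ≤ k, Tj j ⊆ S := by
    intro j hj e he
    rw [hS, Finset.mem_union]
    exact Or.inl (Finset.mem_biUnion.mpr ⟨j, Finset.mem_range.mpr (by omega), he⟩)
  have hesub : ∀ j, 1 ≤ j → j ≤ k → Sym2.mk (uj j) (vj j) ∈ S := by
    intro j h1 h2
    rw [hS, Finset.mem_union]
    exact Or.inr (Finset.mem_image.mpr ⟨j, Finset.mem_Icc.mpr ⟨h1, h2⟩, rfl⟩)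
  -- edge properties
  have hedge : ∀ e ∈ S, ¬e.IsDiag ∧ 0 < x e := by
    intro e he
    rw [hS, Finset.mem_union] at he
    rcases he with he | he
    · obtain ⟨j, hj, he⟩ := Finset.mem_biUnion.mp he
      rw [Finset.mem_range] at hj
      obtain ⟨hd, hp, -⟩ := ((hTj j (by omega)).1 e he)
      exact ⟨hd, hp⟩
    · obtain ⟨j, hj, rfl⟩ := Finset.mem_image.mp he
      rw [Finset.mem_Icc] at hj
      obtain ⟨hu, hv, hx⟩ := hjj j hj.1 hj.2
      have hne : uj j ≠ vj j := by
        intro h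
        have h1 := hlevLev _ _ hu
        have h2 := hlevLev _ _ hv
        rw [h] at h1
        omega
      exact ⟨by simp [Sym2.mk_isDiag_iff, hne], hx⟩
  -- connectivity
  have hreach : ∀ d, d ≤ k → ∀ v : V, lev s t x v = k - d →
      (SimpleGraph.fromEdgeSet (↑S : Set (Sym2 V))).Reachable s v := by
    intro d
    induction d with
    | zero =>
      intro _ v hv
      have : v ∈ Lev s t x k := by
        simp only [Lev, Finset.mem_filter, Finset.mem_univ, true_and]
        omega
      rw [hk, Lev_top hst hfeas] at this
      rw [Finset.mem_singleton] at this
      subst this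
      rfl
    | succ d ih =>
      intro hd v hv
      have hj1 : k - (d + 1) + 1 = k - d := by omega
      obtain ⟨hu, hv', hx⟩ := hjj (k - d) (by omega) (by omega)
      have hus : (SimpleGraph.fromEdgeSet (↑S : Set (Sym2 V))).Reachable s (uj (k - d)) :=
        ih (by omega) _ (hlevLev _ _ hu)
      have hadj : (SimpleGraph.fromEdgeSet (↑S : Set (Sym2 V))).Adj (uj (k - d)) (vj (k - d)) := by
        refine (SimpleGraph.fromEdgeSet_adj _).mpr ⟨?_, ?_⟩
        · exact_mod_cast hesub (k - d) (by omega) (by omega)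
        · intro h
          have h1 := hlevLev _ _ hu
          have h2 := hlevLev _ _ hv'
          rw [h] at h1
          omega
      have hvLev : v ∈ Lev s t x (k - d - 1) := by
        simp only [Lev, Finset.mem_filter, Finset.mem_univ, true_and]
        omega
      have hreach2 := (hTj (k - d - 1) (by omega)).2.2 (vj (k - d)) hv' v hvLev
      have hmono : SimpleGraph.fromEdgeSet (↑(Tj (k - d - 1)) : Set (Sym2 V)) ≤
          SimpleGraph.fromEdgeSet (↑S : Set (Sym2 V)) :=
        SimpleGraph.fromEdgeSet_mono (Finset.coe_subset.mpr (hTsub _ (by omega)))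
      exact (hus.trans hadj.reachable).trans (SimpleGraph.Reachable.mono hmono hreach2)
  have hreach_s : ∀ v : V, (SimpleGraph.fromEdgeSet (↑S : Set (Sym2 V))).Reachable s v := by
    intro v
    exact hreach (k - lev s t x v) (by omega) v (by have := hlev_le v; omega)
  have hconn : (SimpleGraph.fromEdgeSet (↑S : Set (Sym2 V))).Connected := by
    rw [SimpleGraph.connected_iff]
    exact ⟨fun a b => (hreach_s a).symm.trans (hreach_s b), ⟨s⟩⟩
  -- cardinality
  have hdisjT : ∀ j ∈ Finset.range (k + 1), ∀ j' ∈ Finset.range (k + 1), j ≠ j' →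
      Disjoint (Tj j) (Tj j') := by
    intro j hj j' hj' hne
    rw [Finset.mem_range] at hj hj'
    rw [Finset.disjoint_left]
    intro e he he'
    induction e using Sym2.ind with
    | _ a b =>
      have h1 := (hTj j (by omega)).1 _ he
      have h2 := (hTj j' (by omega)).1 _ he'
      have ha1 := hlevLev _ _ (h1.2.2 a (Sym2.mem_mk_left a b))
      have ha2 := hlevLev _ _ (h2.2.2 a (Sym2.mem_mk_left a b))
      omega
  have hcard1 : ((Finset.range (k + 1)).biUnion Tj).card = ∑ j ∈ Finset.range (k + 1), (Tj j).card :=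
    Finset.card_biUnion hdisjT
  have hLevdisj : ∀ j ∈ Finset.range (k + 1), ∀ j' ∈ Finset.range (k + 1), j ≠ j' →
      Disjoint (Lev s t x j) (Lev s t x j') := by
    intro j _ j' _ hne
    rw [Finset.disjoint_left]
    intro v hv hv'
    have := hlevLev _ _ hv
    have := hlevLev _ _ hv'
    omega
  have hLevcover : Finset.univ = (Finset.range (k + 1)).biUnion (Lev s t x) := by
    ext v
    simp only [Finset.mem_univ, true_iff, Finset.mem_biUnion]
    exact ⟨lev s t x v, Finset.mem_range.mpr (by have := hlev_le v; omega), hmemLev v⟩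
  have hsumLev : ∑ j ∈ Finset.range (k + 1), (Lev s t x j).card = Fintype.card V := by
    rw [← Finset.card_biUnion hLevdisj, ← hLevcover, Finset.card_univ]
  have hsumT : ∑ j ∈ Finset.range (k + 1), ((Tj j).card + 1) =
      ∑ j ∈ Finset.range (k + 1), (Lev s t x j).card := by
    apply Finset.sum_congr rfl
    intro j hj
    rw [Finset.mem_range] at hj
    exact (hTj j (by omega)).2.1
  rw [Finset.sum_add_distrib, Finset.sum_const, Finset.card_range, smul_eq_mul, mul_one] at hsumT
  have hinj : Set.InjOn (fun j => Sym2.mk (uj j) (vj j)) (Finset.Icc 1 k : Set ℕ) := by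
    intro j hj j' hj' heq
    simp only [Finset.coe_Icc, Set.mem_Icc] at hj hj'
    obtain ⟨hu, hv, -⟩ := hjj j hj.1 hj.2
    obtain ⟨hu', hv', -⟩ := hjj j' hj'.1 hj'.2
    have l1 := hlevLev _ _ hu
    have l2 := hlevLev _ _ hv
    have l3 := hlevLev _ _ hu'
    have l4 := hlevLev _ _ hv'
    rcases Sym2.eq_iff.mp heq with ⟨h1, h2⟩ | ⟨h1, h2⟩
    · rw [h1] at l1; omega
    · rw [h1] at l1; rw [h2] at l2; omega
  have hcard2 : ((Finset.Icc 1 k).image (fun j => Sym2.mk (uj j) (vj j))).card = k := by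
    rw [Finset.card_image_of_injOn hinj, Nat.card_Icc]
    omega
  have hdisjTI : Disjoint ((Finset.range (k + 1)).biUnion Tj)
      ((Finset.Icc 1 k).image (fun j => Sym2.mk (uj j) (vj j))) := by
    rw [Finset.disjoint_left]
    intro e he he'
    obtain ⟨j, hj, heT⟩ := Finset.mem_biUnion.mp he
    rw [Finset.mem_range] at hj
    obtain ⟨m, hm, heq⟩ := Finset.mem_image.mp he'
    rw [Finset.mem_Icc] at hm
    obtain ⟨hu, hv, -⟩ := hjj m hm.1 hm.2
    have hin := ((hTj j (by omega)).1 e heT).2.2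
    rw [← heq] at hin
    have l1 := hlevLev _ _ (hin _ (Sym2.mem_mk_left _ _))
    have l2 := hlevLev _ _ (hin _ (Sym2.mem_mk_right _ _))
    have l3 := hlevLev _ _ hu
    have l4 := hlevLev _ _ hv
    omega
  have hScard : S.card = Fintype.card V - 1 := by
    rw [hS, Finset.card_union_of_disjoint hdisjTI, hcard1, hcard2]
    omega
  -- narrow cuts
  refine ⟨S, fun e he => (hedge e he).1, hconn, hScard, fun e he => (hedge e he).2, ?_⟩
  intro C hC
  obtain ⟨U₀, hU₀, rfl⟩ := narrow_normalize hst hfeas hC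
  set m := cNS s t x U₀ with hm
  have hm1 : 1 ≤ m := cNS_pos hU₀
  have hm2 : m ≤ k := cNS_le U₀
  have hmem : ∀ v : V, v ∈ U₀ ↔ m ≤ lev s t x v := mem_iff_cNS hfeas hU₀
  have : cutOf U₀ ∩ S = {Sym2.mk (uj m) (vj m)} := by
    ext e
    rw [Finset.mem_inter, Finset.mem_singleton]
    constructor
    · rintro ⟨heC, heS⟩
      simp only [cutOf, Finset.mem_filter, Finset.mem_univ, true_and] at heC
      obtain ⟨a, b, rfl, haU, hbU⟩ := heC
      have hla : m ≤ lev s t x a := (hmem a).mp haU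
      have hlb : ¬ m ≤ lev s t x b := fun h => hbU ((hmem b).mpr h)
      rw [hS, Finset.mem_union] at heS
      rcases heS with heS | heS
      · exfalso
        obtain ⟨j, hj, heT⟩ := Finset.mem_biUnion.mp heS
        rw [Finset.mem_range] at hj
        have hin := ((hTj j (by omega)).1 _ heT).2.2
        have l1 := hlevLev _ _ (hin a (Sym2.mem_mk_left a b))
        have l2 := hlevLev _ _ (hin b (Sym2.mem_mk_right a b))
        omega
      · obtain ⟨j, hj, heq⟩ := Finset.mem_image.mp heS
        rw [Finset.mem_Icc] at hj
        obtain ⟨hu, hv, -⟩ := hjj j hj.1 hj.2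
        have l3 := hlevLev _ _ hu
        have l4 := hlevLev _ _ hv
        have hjm : j = m := by
          rcases Sym2.eq_iff.mp heq.symm with ⟨h1, h2⟩ | ⟨h1, h2⟩
          · rw [← h1] at l3; rw [← h2] at l4; omega
          · rw [← h1] at l4; rw [← h2] at l3; omega
        rw [← heq, hjm]
    · rintro rfl
      obtain ⟨hu, hv, -⟩ := hjj m hm1 hm2
      have l3 := hlevLev _ _ hu
      have l4 := hlevLev _ _ hv
      constructor
      · simp only [cutOf, Finset.mem_filter, Finset.mem_univ, true_and]
        refine ⟨uj m, vj m, rfl, (hmem _).mpr (by omega), fun h => ?_⟩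
        have := (hmem _).mp h
        omega
      · exact hesub m hm1 hm2
  rw [this, Finset.card_singleton]

end Build

theorem stmt2 {V : Type*} [Fintype V] [DecidableEq V]
    (hV : 2 ≤ Fintype.card V) (s t : V) (hst : s ≠ t)
    (xstar : Sym2 V → ℝ) (hfeas : LPFeasible s t xstar)
 :
    ∃ S : Finset (Sym2 V), IsSpanningTree S ∧
      (∀ e ∈ S, 0 < xstar e) ∧
      ∀ C : Finset (Sym2 V), IsNarrowCut xstar C → (C ∩ S).card = 1 := by
  obtain ⟨S, h1, h2, h3, h4, h5⟩ := main_tree hst hfeas hV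
  exact ⟨S, ⟨h1, h2, h3⟩, h4, h5⟩

end STT

end
end

section
/- Let S_1, ..., S_r ∈ 𝒮 and ε ≥ 0 be such that x := (1/r) Σ_{j'=1}^r χ^{S_{j'}} satisfies property (★). Let 0 ≤ h < i ≤ ℓ and 1 ≤ j ≤ r with j ≤ θ_h and j ≤ θ_i. Then there exists an index k with j ≤ k ≤ r such that S_k ∩ C_h ∩ C_i = ∅. -/
open Finset SimpleGraph

attribute [local instance 10] Classical.propDecidable

noncomputable section

namespace STT

variable {V : Type*} [Fintype V] [DecidableEq V]

lemma mem_cutOf_mk {U : Finset V} {u v : V} :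
    Sym2.mk u v ∈ cutOf U ↔ ((u ∈ U ∧ v ∉ U) ∨ (v ∈ U ∧ u ∉ U)) := by
  simp only [cutOf, Finset.mem_filter, Finset.mem_univ, true_and]
  constructor
  · rintro ⟨a, b, hab, ha, hb⟩
    rcases Sym2.eq_iff.mp hab with ⟨h1, h2⟩ | ⟨h1, h2⟩
    · subst h1; subst h2; exact Or.inl ⟨ha, hb⟩
    · subst h1; subst h2; exact Or.inr ⟨ha, hb⟩
  · rintro (⟨h1, h2⟩ | ⟨h1, h2⟩)
    · exact ⟨u, v, rfl, h1, h2⟩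
    · exact ⟨v, u, Sym2.eq_swap, h1, h2⟩

lemma cut_sdiff_eq {A B : Finset V} (hAB : A ⊆ B) :
    cutOf (B \ A) = (cutOf A ∪ cutOf B) \ (cutOf A ∩ cutOf B) := by
  ext e
  induction e using Sym2.inductionOn with
  | hf u v =>
    have hu := @hAB u
    have hv := @hAB v
    simp only [Finset.mem_sdiff, Finset.mem_union, Finset.mem_inter, mem_cutOf_mk,
      Finset.mem_sdiff]
    tauto

lemma xval_cut_identity (x : Sym2 V → ℝ) {A B : Finset V} (hAB : A ⊆ B) :
    xval x (cutOf A) + xval x (cutOf B)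
      = xval x (cutOf (B \ A)) + 2 * xval x (cutOf A ∩ cutOf B) := by
  have h1 := Finset.sum_union_inter (s₁ := cutOf A) (s₂ := cutOf B) (f := x)
  have h2 := Finset.sum_sdiff (f := x)
    (Finset.inter_subset_union (s := cutOf A) (t := cutOf B))
  rw [cut_sdiff_eq hAB]
  unfold xval
  linarith

theorem stmt5 {V : Type*} [Fintype V] [DecidableEq V]
    (hV : 2 ≤ Fintype.card V) (s t : V) (hst : s ≠ t)
    (xstar : Sym2 V → ℝ) (hfeas : LPFeasible s t xstar)
    (r : ℕ) (hr : 1 ≤ r) (S : ℕ → Finset (Sym2 V))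
    (hS : ∀ j ∈ Finset.Icc 1 r, IsSpanningTree (S j))
    (ε : ℝ) (hε : 0 ≤ ε)
    (hstar : StarProp s t xstar ε (fun e => (∑ j ∈ Finset.Icc 1 r, chi (S j) e) / (r : ℝ)))
    (ℓ : ℕ) (U : ℕ → Finset V)
    (hU0 : U 0 = {s}) (hUl : U ℓ = Finset.univ \ {t})
    (hUchain : ∀ i < ℓ, U i ⊂ U (i + 1))
    (hUnarrow : ∀ C : Finset (Sym2 V), IsNarrowCut xstar C ↔ ∃ i ≤ ℓ, C = cutOf (U i))
    (h i j : ℕ) (hhi : h < i) (hiℓ : i ≤ ℓ) (hj1 : 1 ≤ j) (hjr : j ≤ r)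
    (hjθh : (j : ℤ) ≤ theta r xstar ε U h) (hjθi : (j : ℤ) ≤ theta r xstar ε U i) :
    ∃ k, j ≤ k ∧ k ≤ r ∧ S k ∩ cutOf (U h) ∩ cutOf (U i) = ∅ := by
  by_contra hcon
  push_neg at hcon
  have hbad : ∀ k, j ≤ k → k ≤ r → S k ∩ cutOf (U h) ∩ cutOf (U i) ≠ ∅ := fun k h1 h2 => (hcon k h1 h2).ne_empty
  -- monotonicity of the chain
  have hmono : ∀ b ≤ ℓ, ∀ a ≤ b, U a ⊆ U b := by
    intro b
    induction b with
    | zero =>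
      intro _ a ha
      have : a = 0 := Nat.le_zero.mp ha
      subst this; exact subset_rfl
    | succ n ih =>
      intro hb a ha
      rcases Nat.lt_or_ge a (n + 1) with h' | h'
      · exact (ih (by omega) a (by omega)).trans (hUchain n (by omega)).subset
      · have : a = n + 1 := by omega
        subst this; exact subset_rfl
  have hUhi : U h ⊂ U i := by
    have h1 : U h ⊂ U (h + 1) := hUchain h (by omega)
    have h2 : U (h + 1) ⊆ U i := hmono i hiℓ (h + 1) (by omega)
    exact h1.trans_subset h2
  have hsUh : s ∈ U h := by
    have h0 : U 0 ⊆ U h := hmono h (by omega) 0 (by omega)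
    exact h0 (by simp [hU0])
  have htUi : t ∉ U i := by
    intro htmem
    have h0 : U i ⊆ U ℓ := hmono ℓ le_rfl i hiℓ
    have := h0 htmem
    rw [hUl] at this
    simp at this
  -- the middle set M
  set M : Finset V := U i \ U h with hM
  have hMne : M.Nonempty := by
    obtain ⟨w, hw1, hw2⟩ := Finset.exists_of_ssubset hUhi
    exact ⟨w, Finset.mem_sdiff.mpr ⟨hw1, hw2⟩⟩
  have hsM : s ∉ M := fun hc => (Finset.mem_sdiff.mp hc).2 hsUh
  have htM : t ∉ M := fun hc => htUi (Finset.mem_sdiff.mp hc).1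
  have hMuniv : M ≠ Finset.univ := by
    intro hc
    exact hsM (hc ▸ Finset.mem_univ s)
  have hMst : M ∩ ({s, t} : Finset V) = ∅ := by
    ext v
    simp only [Finset.mem_inter, Finset.mem_insert, Finset.mem_singleton,
      Finset.notMem_empty, iff_false, not_and]
    rintro hvM (rfl | rfl)
    · exact hsM hvM
    · exact htM hvM
  have hD : 2 ≤ xval xstar (cutOf M) := by
    apply hfeas.2.2.1 M hMne hMuniv
    rw [hMst]
    simp
  -- the cut identity
  have key : xval xstar (cutOf (U h)) + xval xstar (cutOf (U i))
      = xval xstar (cutOf M) + 2 * xval xstar (cutOf (U h) ∩ cutOf (U i)) :=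
    xval_cut_identity xstar hUhi.subset
  set F : Finset (Sym2 V) := cutOf (U h) ∩ cutOf (U i) with hF
  set x : Sym2 V → ℝ := fun e => (∑ j' ∈ Finset.Icc 1 r, chi (S j') e) / (r : ℝ) with hx
  have hrR : (1 : ℝ) ≤ (r : ℝ) := by exact_mod_cast hr
  have hr0 : (r : ℝ) ≠ 0 := by linarith
  -- lower bound on r * x(F)
  have hswap : xval x F = (∑ k ∈ Finset.Icc 1 r, ∑ e ∈ F, chi (S k) e) / (r : ℝ) := by
    unfold xval
    rw [← Finset.sum_div, Finset.sum_comm]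
  have hterm : ∀ k ∈ Finset.Icc j r, (1 : ℝ) ≤ ∑ e ∈ F, chi (S k) e := by
    intro k hk
    simp only [Finset.mem_Icc] at hk
    have hne : (S k ∩ cutOf (U h) ∩ cutOf (U i)).Nonempty :=
      Finset.nonempty_iff_ne_empty.mpr (hbad k hk.1 hk.2)
    obtain ⟨e, he⟩ := hne
    simp only [Finset.mem_inter] at he
    have heF : e ∈ F := Finset.mem_inter.mpr ⟨he.1.2, he.2⟩
    have heS : e ∈ S k := he.1.1
    have h1 : chi (S k) e = 1 := by simp [chi, heS]
    calc (1 : ℝ) = chi (S k) e := h1.symm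
      _ ≤ ∑ e ∈ F, chi (S k) e := by
          apply Finset.single_le_sum (fun i _ => ?_) heF
          unfold chi
          split <;> norm_num
  have hchinn : ∀ k, ∀ e, (0 : ℝ) ≤ chi (S k) e := by
    intro k e
    unfold chi
    split <;> norm_num
  have hcardIcc : ((Finset.Icc j r).card : ℝ) = (r : ℝ) + 1 - (j : ℝ) := by
    rw [Nat.card_Icc, Nat.cast_sub (by omega)]
    push_cast
    ring
  have hlow : (r : ℝ) + 1 - (j : ℝ) ≤ ∑ k ∈ Finset.Icc 1 r, ∑ e ∈ F, chi (S k) e := by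
    calc (r : ℝ) + 1 - (j : ℝ) = ∑ k ∈ Finset.Icc j r, (1 : ℝ) := by
          rw [Finset.sum_const, nsmul_eq_mul, mul_one, hcardIcc]
      _ ≤ ∑ k ∈ Finset.Icc j r, ∑ e ∈ F, chi (S k) e := Finset.sum_le_sum hterm
      _ ≤ ∑ k ∈ Finset.Icc 1 r, ∑ e ∈ F, chi (S k) e := by
          apply Finset.sum_le_sum_of_subset_of_nonneg
          · exact Finset.Icc_subset_Icc (by omega) le_rfl
          · intro k _ _
            exact Finset.sum_nonneg fun e _ => hchinn k e
  have hcount : (r : ℝ) + 1 - (j : ℝ) ≤ (r : ℝ) * xval x F := by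
    rw [hswap, mul_div_cancel₀ _ hr0]
    exact hlow
  -- property (★) upper bound
  have hx2 : xval x F ≤ xval xstar F + ε := (hstar.2.2 F).2
  -- ceiling bounds
  have hθh : (j : ℝ) - 1 < (r : ℝ) * (2 - xval xstar (cutOf (U h)) - ε) := by
    unfold theta at hjθh
    have h2 : ((j : ℤ) : ℝ) ≤ ((⌈(r : ℝ) * (2 - xval xstar (cutOf (U h)) - ε)⌉ : ℤ) : ℝ) := by
      exact_mod_cast hjθh
    have h3 := Int.ceil_lt_add_one ((r : ℝ) * (2 - xval xstar (cutOf (U h)) - ε))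
    push_cast at h2
    linarith
  have hθi : (j : ℝ) - 1 < (r : ℝ) * (2 - xval xstar (cutOf (U i)) - ε) := by
    unfold theta at hjθi
    have h2 : ((j : ℤ) : ℝ) ≤ ((⌈(r : ℝ) * (2 - xval xstar (cutOf (U i)) - ε)⌉ : ℤ) : ℝ) := by
      exact_mod_cast hjθi
    have h3 := Int.ceil_lt_add_one ((r : ℝ) * (2 - xval xstar (cutOf (U i)) - ε))
    push_cast at h2
    linarith
  -- combine
  have hxsF : xval xstar F + ε
      ≤ (xval xstar (cutOf (U h)) + xval xstar (cutOf (U i)) - 2) / 2 + ε := by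
    linarith
  have hx2r : (r : ℝ) * xval x F
      ≤ (r : ℝ) * ((xval xstar (cutOf (U h)) + xval xstar (cutOf (U i)) - 2) / 2 + ε) :=
    mul_le_mul_of_nonneg_left (le_trans hx2 hxsF) (by linarith)
  have hexp : (r : ℝ) * ((xval xstar (cutOf (U h)) + xval xstar (cutOf (U i)) - 2) / 2 + ε)
      = ((r : ℝ) * (2 - xval xstar (cutOf (U h)) - ε)
        + (r : ℝ) * (2 - xval xstar (cutOf (U i)) - ε)) / (-2) + (r : ℝ) := by
    ring
  rw [hexp] at hx2r
  linarith

end STT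

end
end

section
/- Let S_1, ..., S_r ∈ 𝒮 and ε ≥ 0 be such that x := (1/r) Σ_{j'=1}^r χ^{S_{j'}} satisfies property (★). Let 1 ≤ i ≤ ℓ − 1 and j ≤ θ_i with |C_i ∩ S_j| ≥ 2. Then there exists an index k with θ_i < k ≤ r and |C_i ∩ S_k| = 1. -/
open Finset SimpleGraph

attribute [local instance 10] Classical.propDecidable

noncomputable section

namespace STT

variable {V : Type*} [Fintype V] [DecidableEq V]

theorem stmt6 {V : Type*} [Fintype V] [DecidableEq V]
    (hV : 2 ≤ Fintype.card V) (s t : V) (hst : s ≠ t)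
    (xstar : Sym2 V → ℝ) (hfeas : LPFeasible s t xstar)
    (r : ℕ) (hr : 1 ≤ r) (S : ℕ → Finset (Sym2 V))
    (hS : ∀ j ∈ Finset.Icc 1 r, IsSpanningTree (S j))
    (ε : ℝ) (hε : 0 ≤ ε)
    (hstar : StarProp s t xstar ε (fun e => (∑ j ∈ Finset.Icc 1 r, chi (S j) e) / (r : ℝ)))
    (ℓ : ℕ) (U : ℕ → Finset V)
    (hU0 : U 0 = {s}) (hUl : U ℓ = Finset.univ \ {t})
    (hUchain : ∀ i < ℓ, U i ⊂ U (i + 1))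
    (hUnarrow : ∀ C : Finset (Sym2 V), IsNarrowCut xstar C ↔ ∃ i ≤ ℓ, C = cutOf (U i))
    (i j : ℕ) (hi1 : 1 ≤ i) (hiℓ : i + 1 ≤ ℓ) (hj1 : 1 ≤ j) (hjr : j ≤ r)
    (hjθi : (j : ℤ) ≤ theta r xstar ε U i)
    (hbig : 2 ≤ (cutOf (U i) ∩ S j).card) :
    ∃ k : ℕ, theta r xstar ε U i < (k : ℤ) ∧ k ≤ r ∧ (cutOf (U i) ∩ S k).card = 1 := by
  classical
  set C := cutOf (U i) with hC
  -- monotone chain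
  have hmono : ∀ a b : ℕ, a ≤ b → b ≤ ℓ → U a ⊆ U b := by
    intro a b hab
    induction b, hab using Nat.le_induction with
    | base => intro _; exact subset_rfl
    | succ b hb ih =>
      intro hbl
      exact (ih (by omega)).trans (hUchain b (by omega)).subset
  have hsUi : s ∈ U i := hmono 0 i (by omega) (by omega) (by rw [hU0]; simp)
  have htUi : t ∉ U i := by
    intro h
    have := hmono i ℓ (by omega) le_rfl h
    rw [hUl] at this
    simp at this
  -- every spanning tree crosses C
  have hcross : ∀ k ∈ Finset.Icc 1 r, 1 ≤ (C ∩ S k).card := by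
    intro k hk
    obtain ⟨-, hconn, -⟩ := hS k hk
    obtain ⟨w⟩ := hconn.preconnected s t
    obtain ⟨d, _, hdf, hds⟩ :=
      w.exists_boundary_dart (↑(U i) : Set V) (Finset.mem_coe.mpr hsUi)
        (fun h => htUi (Finset.mem_coe.mp h))
    have hadj := d.adj
    rw [SimpleGraph.fromEdgeSet_adj] at hadj
    have hmem : Sym2.mk d.fst d.snd ∈ C ∩ S k := by
      rw [Finset.mem_inter]
      refine ⟨?_, Finset.mem_coe.mp hadj.1⟩
      simp only [hC, cutOf, Finset.mem_filter, Finset.mem_univ, true_and]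
      exact ⟨d.fst, d.snd, rfl, hdf, hds⟩
    exact Finset.card_pos.mpr ⟨_, hmem⟩
  -- the value of x on C
  have key : xval (fun e => (∑ j ∈ Finset.Icc 1 r, chi (S j) e) / (r : ℝ)) C
      = (∑ k ∈ Finset.Icc 1 r, ((C ∩ S k).card : ℝ)) / (r : ℝ) := by
    unfold xval
    rw [← Finset.sum_div, Finset.sum_comm]
    congr 1
    refine Finset.sum_congr rfl fun k _ => ?_
    unfold chi
    rw [Finset.sum_boole, Finset.filter_mem_eq_inter]
  set θ := theta r xstar ε U i with hθ
  by_contra hcon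
  push_neg at hcon
  set m := min θ.toNat r with hm
  have hmr : m ≤ r := min_le_right _ _
  have hjθ : j ≤ θ.toNat := by omega
  have hjm : j ≤ m := le_min hjθ hjr
  -- lower bound on the first part of the sum
  have hjmem : j ∈ Finset.Ioc 0 m := by
    rw [Finset.mem_Ioc]; omega
  have hlow1 : m + 1 ≤ ∑ k ∈ Finset.Ioc 0 m, (C ∩ S k).card := by
    have h1 : ∀ k ∈ (Finset.Ioc 0 m).erase j, 1 ≤ (C ∩ S k).card := by
      intro k hk
      rw [Finset.mem_erase, Finset.mem_Ioc] at hk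
      exact hcross k (by rw [Finset.mem_Icc]; omega)
    have h2 := Finset.card_nsmul_le_sum ((Finset.Ioc 0 m).erase j) _ 1 h1
    rw [Finset.card_erase_of_mem hjmem, Nat.card_Ioc, smul_eq_mul, mul_one] at h2
    have h3 : (C ∩ S j).card + ∑ k ∈ (Finset.Ioc 0 m).erase j, (C ∩ S k).card
        = ∑ k ∈ Finset.Ioc 0 m, (C ∩ S k).card :=
      Finset.add_sum_erase _ (fun k => (C ∩ S k).card) hjmem
    have hbig' : 2 ≤ (C ∩ S j).card := hbig
    omega
  -- lower bound on the second part of the sum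
  have hlow2 : 2 * (r - m) ≤ ∑ k ∈ Finset.Ioc m r, (C ∩ S k).card := by
    have h1 : ∀ k ∈ Finset.Ioc m r, 2 ≤ (C ∩ S k).card := by
      intro k hk
      rw [Finset.mem_Ioc] at hk
      have hk1 : 1 ≤ (C ∩ S k).card := hcross k (by rw [Finset.mem_Icc]; omega)
      have hkθ : θ < (k : ℤ) := by omega
      have := hcon k hkθ hk.2
      omega
    have h2 := Finset.card_nsmul_le_sum (Finset.Ioc m r) _ 2 h1
    rw [Nat.card_Ioc, smul_eq_mul] at h2
    omega
  have hsplit : (∑ k ∈ Finset.Ioc 0 m, (C ∩ S k).card)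
      + ∑ k ∈ Finset.Ioc m r, (C ∩ S k).card
      = ∑ k ∈ Finset.Ioc 0 r, (C ∩ S k).card :=
    Finset.sum_Ioc_consecutive _ (Nat.zero_le m) hmr
  have hICC : Finset.Icc 1 r = Finset.Ioc 0 r := Finset.Icc_add_one_left_eq_Ioc 0 r
  have hlowN : (m + 1) + 2 * (r - m) ≤ ∑ k ∈ Finset.Icc 1 r, (C ∩ S k).card := by
    rw [hICC]; omega
  -- real-valued bounds
  have hrpos : (0 : ℝ) < r := by exact_mod_cast Nat.lt_of_lt_of_le Nat.zero_lt_one hr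
  have hub : (∑ k ∈ Finset.Icc 1 r, ((C ∩ S k).card : ℝ)) / (r : ℝ)
      ≤ xval xstar C + ε := by
    rw [← key]; exact (hstar.2.2 C).2
  have hubs : (∑ k ∈ Finset.Icc 1 r, ((C ∩ S k).card : ℝ))
      ≤ (r : ℝ) * (xval xstar C + ε) := by
    rw [div_le_iff₀ hrpos] at hub
    linarith
  have hlowR : (m : ℝ) + 1 + 2 * ((r : ℝ) - m)
      ≤ ∑ k ∈ Finset.Icc 1 r, ((C ∩ S k).card : ℝ) := by
    calc (m : ℝ) + 1 + 2 * ((r : ℝ) - m)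
        = (((m + 1) + 2 * (r - m) : ℕ) : ℝ) := by
          push_cast [Nat.cast_sub hmr]; ring
      _ ≤ _ := by exact_mod_cast Nat.cast_le.mpr hlowN
  have hceil : θ ≤ (m : ℤ) - 1 := by
    rw [hθ]
    unfold theta
    rw [← hC]
    apply Int.ceil_le.mpr
    push_cast
    linarith
  have hmθ : (m : ℤ) ≤ θ := by omega
  omega

end STT

end
end
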